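/- Let R^(t)(s) denote the t-set Ramsey number, define n_0 = 4 and n_i = R^(t_i - 1)(n_{i-1}) for 1 ≤ i ≤ 5, where (t_1,t_2,t_3,t_4,t_5) = (3,4,4,5,5) are the lengths of the patterns s_1 = 132, s_2 = 1232, s_3 = 1312, s_4 = 13232, s_5 = 13132, and let n ≥ n_5 + 1. Then for every 2-colouring c : [3]^n → {0,1} there exist a set T_0 ⊆ [n-1] with |T_0| ≥ 4 and colours d_1, ..., d_5 ∈ {0,1} such that for each i ∈ {1,...,5}, every word w ∈ [3]^n with T(w) ⊆ T_0 and \overline{w} = s_i satisfies c(w) = d_i. -/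

import Mathlib

/-- The set of breakpoints `T(w) ⊆ {1,…,n-1}` of a word `w ∈ [3]^n`: `a` is a breakpoint
iff `1 ≤ a < n` and the (1-based) letters at positions `a` and `a+1` differ (coordinate
`i : Fin n` encodes 1-based position `i+1`). -/
def breakpoints {n : ℕ} (w : Fin n → Fin 3) : Set ℕ :=
  {a | ∃ h : 1 ≤ a ∧ a < n,
    w ⟨a - 1, lt_of_le_of_lt (Nat.sub_le a 1) h.2⟩ ≠ w ⟨a, h.2⟩}

/-- The contracted word `w̄`, obtained by contracting each maximal constant run of `w`
to a single letter. -/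
def contractWord {n : ℕ} (w : Fin n → Fin 3) : List (Fin 3) :=
  (List.ofFn w).destutter (· ≠ ·)

/-- The five patterns `s₁ = 132`, `s₂ = 1232`, `s₃ = 1312`, `s₄ = 13232`, `s₅ = 13132`,
with letters `1,2,3` encoded as `0,1,2 : Fin 3`. -/
def pattern : Fin 5 → List (Fin 3)
  | 0 => [0, 2, 1]
  | 1 => [0, 1, 2, 1]
  | 2 => [0, 2, 0, 1]
  | 3 => [0, 2, 1, 2, 1]
  | 4 => [0, 2, 0, 2, 1]

/-- The `t`-set Ramsey number `R^(t)(s)`: the least `N` such that every 2-colouring of the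
`t`-element subsets of an `N`-element set admits an `s`-element subset all of whose
`t`-element subsets get the same colour. -/
noncomputable def ramseyNumber (t s : ℕ) : ℕ :=
  sInf {N : ℕ | ∀ χ : Finset (Fin N) → Fin 2,
    ∃ H : Finset (Fin N), H.card = s ∧ ∃ d : Fin 2, ∀ A ⊆ H, A.card = t → χ A = d}

/-! A word whose contraction is a fixed pattern `p` is determined by its breakpoint set, which then
has `|p| - 1` elements. So colouring the words with contraction `p` amounts to colouring the
`(|p| - 1)`-subsets of `{1, …, n - 1}`, and five nested applications of the hypergraph Ramsey
theorem, each inside the homogeneous set produced by the previous one, give `T₀`.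

The hypergraph Ramsey theorem is proved by induction on `t`: Ramsey for `t`-sets yields large sets
on which the colour of a `(t + 1)`-set depends only on its least element, and pigeonholing on
that colour gives a homogeneous set. -/

open Finset

section Ramsey

variable (κ : Type*)

/-- Quantifying over all ground types makes the bound uniform, so that it applies to `Fin N`. -/
def RamseyBound (t s N : ℕ) : Prop :=
  ∀ {α : Type} [LinearOrder α] (V : Finset α), N ≤ #V → ∀ χ : Finset α → κ,
    ∃ H ⊆ V, #H = s ∧ ∃ d, ∀ A ⊆ H, #A = t → χ A = d

variable {κ}

lemma exists_minHomogeneous {t : ℕ} (ih : ∀ s, ∃ N, RamseyBound κ t s N) (m : ℕ) :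
    ∃ N, ∀ {α : Type} [LinearOrder α] (V : Finset α), N ≤ #V → ∀ χ : Finset α → κ,
      ∃ H ⊆ V, #H = m ∧ ∃ d : α → κ,
        ∀ A ⊆ H, #A = t + 1 → ∀ x, IsLeast (A : Set α) x → χ A = d x := by
  induction m with
  | zero =>
    refine ⟨0, fun V _ χ => ⟨∅, empty_subset _, card_empty, fun _ => χ ∅, ?_⟩⟩
    intro A hA hAt
    simp [subset_empty.mp hA] at hAt
  | succ m ihm =>
    obtain ⟨M, hM⟩ := ihm
    obtain ⟨N, hN⟩ := ih M
    refine ⟨N + 1, fun V hV χ => ?_⟩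
    have hne : V.Nonempty := card_pos.mp (by omega)
    set x := V.min' hne
    have hx : x ∈ V := V.min'_mem hne
    obtain ⟨H₁, hH₁V, hH₁, d₀, hd₀⟩ :=
      hN (V.erase x) (by rw [card_erase_of_mem hx]; omega) fun B => χ (insert x B)
    obtain ⟨H, hHH₁, hH, d, hd⟩ := hM H₁ hH₁.ge χ
    have hxH : x ∉ H := fun h => by simpa using hH₁V (hHH₁ h)
    have hHV : H ⊆ V := (hHH₁.trans hH₁V).trans (erase_subset _ _)
    refine ⟨insert x H, insert_subset hx hHV, by rw [card_insert_of_notMem hxH, hH],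
      Function.update d x d₀, fun A hA hAt z hz => ?_⟩
    by_cases hxA : x ∈ A
    · -- `x` is the least element of `V`, so it is the least element of every `A ∋ x`
      have hzx : z = x := le_antisymm (hz.2 hxA) (V.min'_le z (insert_subset hx hHV (hA hz.1)))
      have hAx : A.erase x ⊆ H₁ := (subset_insert_iff.mp hA).trans hHH₁
      rw [hzx, Function.update_self, ← hd₀ _ hAx (by rw [card_erase_of_mem hxA, hAt]; rfl),
        insert_erase hxA]
    · have hzx : z ≠ x := fun h => hxA (h ▸ hz.1)
      rw [Function.update_of_ne hzx]
      exact hd A ((subset_insert_iff_of_notMem hxA).mp hA) hAt z hz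

theorem exists_ramseyBound [Fintype κ] [Nonempty κ] (t s : ℕ) :
    ∃ N, RamseyBound κ t s N := by
  classical
  induction t generalizing s with
  | zero =>
    refine ⟨s, fun V hV χ => ?_⟩
    obtain ⟨H, hHV, hH⟩ := exists_subset_card_eq hV
    exact ⟨H, hHV, hH, χ ∅, fun A _ hA => by rw [card_eq_zero.mp hA]⟩
  | succ t ih =>
    obtain ⟨N, hN⟩ := exists_minHomogeneous ih (Fintype.card κ * s)
    refine ⟨N, fun V hV χ => ?_⟩
    obtain ⟨H, hHV, hH, d, hd⟩ := hN V hV χ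
    obtain ⟨e, -, he⟩ := exists_le_card_fiber_of_mul_le_card_of_maps_to
      (fun a _ => mem_univ (d a)) univ_nonempty (by rw [card_univ, hH])
    obtain ⟨H', hH'e, hH'⟩ := exists_subset_card_eq he
    refine ⟨H', hH'e.trans (filter_subset _ _) |>.trans hHV, hH', e, fun A hA hAt => ?_⟩
    have hAne : A.Nonempty := card_pos.mp (by omega)
    rw [hd A (hA.trans (hH'e.trans (filter_subset _ _))) hAt _ (A.isLeast_min' hAne)]
    exact (mem_filter.mp (hH'e (hA (A.min'_mem hAne)))).2

end Ramsey

lemma ramseyNumber_spec (t s : ℕ) (χ : Finset (Fin (ramseyNumber t s)) → Fin 2) :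
    ∃ H : Finset (Fin (ramseyNumber t s)), #H = s ∧
      ∃ d, ∀ A ⊆ H, #A = t → χ A = d := by
  refine Nat.sInf_mem (s := {N | ∀ χ : Finset (Fin N) → Fin 2, _}) ?_ χ
  obtain ⟨N, hN⟩ := exists_ramseyBound (κ := Fin 2) t s
  refine ⟨N, fun χ => ?_⟩
  obtain ⟨H, -, hH⟩ := hN (univ : Finset (Fin N)) (by simp) χ
  exact ⟨H, hH⟩

lemma exists_homogeneous_of_ramseyNumber_le {α : Type*} {t s : ℕ} {V : Finset α}
    (hV : ramseyNumber t s ≤ #V) (χ : Finset α → Fin 2) :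
    ∃ H ⊆ V, #H = s ∧ ∃ d, ∀ A ⊆ H, #A = t → χ A = d := by
  obtain ⟨f⟩ := Function.Embedding.nonempty_of_card_le (α := Fin (ramseyNumber t s)) (β := V)
    (by simpa using hV)
  let g := f.trans (Function.Embedding.subtype _)
  obtain ⟨H, hH, d, hd⟩ := ramseyNumber_spec t s fun B => χ (B.map g)
  refine ⟨H.map g, fun a ha => ?_, by rw [card_map, hH], d, fun A hA hAt => ?_⟩
  · obtain ⟨i, -, rfl⟩ := mem_map.mp ha
    exact (f i).2
  · obtain ⟨B, hBH, rfl⟩ := subset_map_iff.mp hA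
    exact hd B hBH (by rwa [card_map] at hAt)

section ChangePoints

variable {α : Type*} [DecidableEq α]

def changePoints (l : List α) : Finset ℕ := {a ∈ Ico 1 l.length | l[a - 1]? ≠ l[a]?}

lemma changePoints_cons_cons (x y : α) (r : List α) :
    changePoints (x :: y :: r) =
      (if x = y then ∅ else {1}) ∪ (changePoints (y :: r)).map (addRightEmbedding 1) := by
  ext a
  rcases a with _ | _ | a <;> by_cases h : x = y <;> simp [changePoints, h]

lemma length_destutter_ne (l : List α) (hl : l ≠ []) :
    (l.destutter (· ≠ ·)).length = #(changePoints l) + 1 := by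
  induction l with
  | nil => exact absurd rfl hl
  | cons x l ih =>
    rcases l with _ | ⟨y, r⟩
    · simp [changePoints]
    · have h1 : 1 ∉ (changePoints (y :: r)).map (addRightEmbedding 1) := by simp [changePoints]
      rw [List.destutter_cons_cons, changePoints_cons_cons]
      by_cases h : x = y
      · subst h
        simp [← List.destutter_cons', ih]
      · rw [if_pos h, if_neg h, List.length_cons, ← List.destutter_cons', ih (by simp),
          singleton_union, card_insert_of_notMem h1, card_map]

lemma one_mem_changePoints_cons_cons {x y : α} {r : List α} :
    1 ∈ changePoints (x :: y :: r) ↔ x ≠ y := by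
  simp [changePoints]

lemma add_one_mem_changePoints_cons {x : α} {l : List α} {a : ℕ} (ha : a ≠ 0) :
    a + 1 ∈ changePoints (x :: l) ↔ a ∈ changePoints l := by
  obtain ⟨b, rfl⟩ := Nat.exists_eq_succ_of_ne_zero ha
  simp [changePoints]

lemma eq_of_changePoints_eq_of_destutter_eq {l l' : List α} (hlen : l.length = l'.length)
    (hc : changePoints l = changePoints l')
    (hd : l.destutter (· ≠ ·) = l'.destutter (· ≠ ·)) :
    l = l' := by
  induction l generalizing l' with
  | nil => exact (List.length_eq_zero_iff.mp hlen.symm).symm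
  | cons x l ih =>
    rcases l' with _ | ⟨x', l'⟩
    · simp at hlen
    rcases l with _ | ⟨y, r⟩ <;> rcases l' with _ | ⟨y', r'⟩
    · simpa using hd
    all_goals try simp at hlen
    have hxy : x = y ↔ x' = y' := not_iff_not.mp <| by
      rw [← ne_eq, ← ne_eq, ← one_mem_changePoints_cons_cons, ← one_mem_changePoints_cons_cons,
        hc]
    have htail : changePoints (y :: r) = changePoints (y' :: r') := by
      ext a
      rcases eq_or_ne a 0 with rfl | ha
      · simp [changePoints]
      · rw [← add_one_mem_changePoints_cons (x := x) ha,
          ← add_one_mem_changePoints_cons (x := x') ha, hc]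
    have ih' := ih (by simpa using hlen) htail
    rw [List.destutter_cons_cons, List.destutter_cons_cons, ← List.destutter_cons',
      ← List.destutter_cons'] at hd
    by_cases h : x = y
    · have h' := hxy.mp h
      subst h h'
      rw [if_neg (by simp), if_neg (by simp)] at hd
      obtain ⟨rfl, rfl⟩ := List.cons.inj (ih' hd)
      rfl
    · rw [if_pos h, if_pos (mt hxy.mpr h), List.cons.injEq] at hd
      rw [hd.1, ih' hd.2]

end ChangePoints

section Words

variable {n : ℕ}

lemma coe_changePoints_ofFn (w : Fin n → Fin 3) :
    (changePoints (List.ofFn w) : Set ℕ) = breakpoints w := by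
  ext a
  simp only [changePoints, coe_filter, mem_Ico, List.length_ofFn, breakpoints, Set.mem_ofPred_eq]
  exact ⟨fun ⟨h, hne⟩ => ⟨h, by simpa [h.2, Nat.sub_lt_of_lt h.2] using hne⟩,
    fun ⟨h, hne⟩ => ⟨h, by simpa [h.2, Nat.sub_lt_of_lt h.2] using hne⟩⟩

lemma eq_of_breakpoints_eq_of_contractWord_eq {w w' : Fin n → Fin 3}
    (hb : breakpoints w = breakpoints w') (hc : contractWord w = contractWord w') : w = w' :=
  List.ofFn_injective <| eq_of_changePoints_eq_of_destutter_eq (by simp)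
    (coe_injective (by rw [coe_changePoints_ofFn, coe_changePoints_ofFn, hb])) hc

lemma length_contractWord (hn : n ≠ 0) (w : Fin n → Fin 3) :
    (contractWord w).length = #(changePoints (List.ofFn w)) + 1 :=
  length_destutter_ne _ (by simpa using hn)

open Classical in
noncomputable def breakpointColouring (c : (Fin n → Fin 3) → Fin 2) (p : List (Fin 3))
    (A : Finset ℕ) : Fin 2 :=
  if h : ∃ w, breakpoints w = A ∧ contractWord w = p then c h.choose else 0

lemma breakpointColouring_eq (c : (Fin n → Fin 3) → Fin 2) {w : Fin n → Fin 3}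
    {A : Finset ℕ} (hA : breakpoints w = A) : breakpointColouring c (contractWord w) A = c w := by
  have h : ∃ w', breakpoints w' = A ∧ contractWord w' = contractWord w := ⟨w, hA, rfl⟩
  rw [breakpointColouring, dif_pos h, eq_of_breakpoints_eq_of_contractWord_eq
    (h.choose_spec.1.trans hA.symm) h.choose_spec.2]

lemma colour_eq_of_homogeneous (hn : n ≠ 0) {c : (Fin n → Fin 3) → Fin 2}
    {w : Fin n → Fin 3} {p : List (Fin 3)} {T : Finset ℕ} {d : Fin 2}
    (hw : breakpoints w ⊆ T) (hp : contractWord w = p)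
    (hd : ∀ A ⊆ T, #A = p.length - 1 → breakpointColouring c p A = d) :
    c w = d := by
  subst hp
  rw [← breakpointColouring_eq c (coe_changePoints_ofFn w).symm]
  exact hd _ (by rwa [← coe_subset, coe_changePoints_ofFn])
    (by rw [length_contractWord hn]; rfl)

end Words

/-- For `n ≥ n₅ + 1` (with `n₀ = 4`, `n₁ = R^(2)(n₀)`, `n₂ = R^(3)(n₁)`, `n₃ = R^(3)(n₂)`,
`n₄ = R^(4)(n₃)`, `n₅ = R^(4)(n₄)`), for every 2-colouring `c` of `[3]^n` there are a set
`T₀ ⊆ {1,…,n-1}` with `|T₀| ≥ 4` and colours `d₁,…,d₅` such that every word with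
breakpoints inside `T₀` and contracted pattern `sᵢ` has colour `dᵢ`. -/
theorem pattern_colouring_exists (n : ℕ)
    (hn : ramseyNumber 4 (ramseyNumber 4 (ramseyNumber 3 (ramseyNumber 3
            (ramseyNumber 2 4)))) + 1 ≤ n)
    (c : (Fin n → Fin 3) → Fin 2) :
    ∃ T₀ : Finset ℕ, T₀ ⊆ Finset.Ico 1 n ∧ 4 ≤ T₀.card ∧
      ∃ d : Fin 5 → Fin 2, ∀ (i : Fin 5) (w : Fin n → Fin 3),
        breakpoints w ⊆ ↑T₀ → contractWord w = pattern i → c w = d i := by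
  have hV : ramseyNumber 4 (ramseyNumber 4 (ramseyNumber 3 (ramseyNumber 3
      (ramseyNumber 2 4)))) ≤ #(Ico 1 n) := by
    rw [Nat.card_Ico]; omega
  obtain ⟨H₄, hH₄, hH₄c, d₄, hd₄⟩ :=
    exists_homogeneous_of_ramseyNumber_le hV (breakpointColouring c (pattern 4))
  obtain ⟨H₃, hH₃, hH₃c, d₃, hd₃⟩ :=
    exists_homogeneous_of_ramseyNumber_le hH₄c.ge (breakpointColouring c (pattern 3))
  obtain ⟨H₂, hH₂, hH₂c, d₂, hd₂⟩ :=
    exists_homogeneous_of_ramseyNumber_le hH₃c.ge (breakpointColouring c (pattern 2))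
  obtain ⟨H₁, hH₁, hH₁c, d₁, hd₁⟩ :=
    exists_homogeneous_of_ramseyNumber_le hH₂c.ge (breakpointColouring c (pattern 1))
  obtain ⟨H₀, hH₀, hH₀c, d₀, hd₀⟩ :=
    exists_homogeneous_of_ramseyNumber_le hH₁c.ge (breakpointColouring c (pattern 0))
  have hn0 : n ≠ 0 := by omega
  refine ⟨H₀, hH₀.trans <| hH₁.trans <| hH₂.trans <| hH₃.trans hH₄, hH₀c.ge,
    ![d₀, d₁, d₂, d₃, d₄], fun i w hw hp => ?_⟩
  fin_cases i
  · exact colour_eq_of_homogeneous hn0 hw hp hd₀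
  · exact colour_eq_of_homogeneous hn0 hw hp fun A hA => hd₁ A (hA.trans hH₀)
  · exact colour_eq_of_homogeneous hn0 hw hp fun A hA => hd₂ A (hA.trans (hH₀.trans hH₁))
  · exact colour_eq_of_homogeneous hn0 hw hp fun A hA =>
      hd₃ A (hA.trans (hH₀.trans (hH₁.trans hH₂)))
  · exact colour_eq_of_homogeneous hn0 hw hp fun A hA =>
      hd₄ A (hA.trans (hH₀.trans (hH₁.trans (hH₂.trans hH₃))))
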